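/- Let G be a finitely generated abelian group and let f : G → ℝ be a function such that for every real t the set S(t) = {x ∈ G : f(x) ≥ t} is a subgroup of G. If (x_i) is a sequence in G such that (f(x_i)) is strictly decreasing, then (f(x_i)) does not converge; in particular the values of f cannot accumulate from above. -/
import Mathlib

open Filter

/-- If every superlevel set of `f : G → ℝ` on a finitely generated abelian group is a
subgroup, then the values of `f` along a strictly decreasing sequence of values cannot
converge; in particular values of `f` cannot accumulate from above. -/
theorem values_cannot_accumulate_from_above
    (G : Type*) [AddCommGroup G] [AddGroup.FG G]
    (f : G → ℝ)
    (hS : ∀ t : ℝ, ∃ S : AddSubgroup G, (S : Set G) = {x : G | t ≤ f x})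
    (x : ℕ → G) (hdec : StrictAnti (fun i => f (x i))) :
    ¬ ∃ l : ℝ, Tendsto (fun i => f (x i)) atTop (nhds l) := by
  intro _
  -- we derive False from the existence of the strictly decreasing sequence alone
  have : Module.Finite ℤ G := Module.Finite.iff_addGroup_fg.mpr ‹_›
  have hnoeth : IsNoetherian ℤ G := inferInstance
  choose S hSmem using hS
  -- chain of submodules
  have hmem : ∀ t y, y ∈ S t ↔ t ≤ f y := by
    intro t y
    rw [← SetLike.mem_coe, hSmem t]; rfl
  set C : ℕ →o Submodule ℤ G :=
    ⟨fun i => AddSubgroup.toIntSubmodule (S (f (x i))), by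
      intro i j hij
      intro y hy
      have : f (x i) ≤ f y := (hmem _ _).mp hy
      exact (hmem _ _).mpr (le_trans (hdec.antitone hij) this)⟩ with hC
  obtain ⟨n, hn⟩ := monotone_stabilizes_iff_noetherian.mpr hnoeth C
  have h1 : x (n + 1) ∈ C (n + 1) := (hmem _ _).mpr le_rfl
  have h2 : x (n + 1) ∉ C n := by
    intro h
    exact absurd ((hmem _ _).mp h) (not_le.mpr (hdec (Nat.lt_succ_self n)))
  exact h2 (hn (n + 1) (Nat.le_succ n) ▸ h1)
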